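/- Let E = S^{n-1} = { ξ ∈ ℝ^n : |ξ| = 1 } be the euclidean unit sphere of ℝ^n, regarded as a subset of ℂ^n. Then Siciak's homogeneous extremal function of E equals the cross norm associated to the euclidean norm: Ψ_E(ζ) = |ζ|_c for every ζ ∈ ℂ^n. -/

import Mathlib

/-!
Write `ζ = d (ξ + i η)` with `|d| = 1`, `ξ ⊥ η` and `|η| ≤ |ξ|` (rotate `∑ ζᵢ²` onto the positive
real axis); both sides then equal `|ξ| + |η|`. The decomposition `ζ = d ξ + (d i) η` bounds the
cross norm from above. With `u = ξ / |ξ|`, `v = η / |η|`, the linear form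
`ζ ↦ ⟪d (u + i v), ζ⟫` has modulus at most `|ω|` at real `ω` by Bessel's inequality and takes the
value `|ξ| + |η|` at `ζ`, so it bounds the cross norm and `Ψ` from below. Finally, for `p`
homogeneous of degree `k` with `|p| ≤ 1` on the sphere, `z ↦ p(((z² + 1)/2) u + i ((1 - z²)/2) v)`
equals `zᵏ p(Re z · u + Im z · v)` on the unit circle, so it is bounded by `1` on the disc; at the
real point `r = √((|ξ| - |η|)/(|ξ| + |η|))` its value is `p(ξ + i η) / (|ξ| + |η|)ᵏ`.
-/

open scoped ENNReal RealInnerProductSpace BigOperators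
open Filter MeasureTheory

noncomputable section

/-- ℂⁿ with the hermitian (euclidean) norm. -/
abbrev Cn (n : ℕ) := EuclideanSpace ℂ (Fin n)
/-- ℝⁿ with the euclidean norm. -/
abbrev Rn (n : ℕ) := EuclideanSpace ℝ (Fin n)

/-- The inclusion ℝⁿ ⊆ ℂⁿ. -/
def toCn {n : ℕ} (x : Rn n) : Cn n := WithLp.toLp 2 (fun i => (x i : ℂ))

/-- Evaluation of a polynomial on ℂⁿ at a point of ℂⁿ. -/
def evalP {n : ℕ} (p : MvPolynomial (Fin n) ℂ) (ζ : Cn n) : ℂ :=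
  MvPolynomial.eval (fun i => ζ i) p

/-- Siciak's homogeneous extremal function with weight `γ`:
`Ψ_{E,γ}(ζ) = sup{ |p(ζ)|^{1/k} : p homogeneous of degree k ≥ 1, |p|^{1/k} ≤ γ on E }`. -/
def siciak {n : ℕ} (E : Set (Cn n)) (γ : Cn n → ℝ) (ζ : Cn n) : ℝ≥0∞ :=
  ⨆ (p : MvPolynomial (Fin n) ℂ) (k : ℕ) (_ : p.IsHomogeneous k) (_ : 1 ≤ k)
    (_ : ∀ ξ ∈ E, ‖evalP p ξ‖ ^ (1 / (k : ℝ)) ≤ γ ξ),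
    ENNReal.ofReal (‖evalP p ζ‖ ^ (1 / (k : ℝ)))

/-- The upper semicontinuous regularization `Ψ^*(ζ) = limsup_{ϑ → ζ} Ψ(ϑ)`. -/
def siciakStar {n : ℕ} (E : Set (Cn n)) (γ : Cn n → ℝ) (ζ : Cn n) : ℝ≥0∞ :=
  Filter.limsup (siciak E γ) (nhds ζ)

/-- `E` has positive homogeneous capacity in the sense of Siciak:
`Ψ_E^*` is bounded above on the unit sphere of ℂⁿ. -/
def PosHomCapacity {n : ℕ} (E : Set (Cn n)) : Prop :=
  ∃ M : ℝ, ∀ ζ : Cn n, ‖ζ‖ = 1 → siciakStar E (fun _ => 1) ζ ≤ ENNReal.ofReal M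

end

noncomputable section

/-- The cross norm on ℂⁿ associated to a norm `ν` on ℝⁿ. -/
def crossNorm {n : ℕ} (ν : Rn n → ℝ) (ζ : Cn n) : ℝ :=
  sInf { s : ℝ | ∃ (N : ℕ) (α : Fin N → ℂ) (ω : Fin N → Rn n),
    ζ = ∑ j, α j • toCn (ω j) ∧ s = ∑ j, ‖α j‖ * ν (ω j) }


open scoped InnerProductSpace ComplexConjugate
open Complex MvPolynomial

section toCn

variable {n : ℕ}

@[simp] lemma toCn_apply (x : Rn n) (i : Fin n) : toCn x i = x i := rfl

@[simp] lemma toCn_zero : toCn (0 : Rn n) = 0 := by ext; simp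

@[simp] lemma toCn_add (x y : Rn n) : toCn (x + y) = toCn x + toCn y := by ext; simp

@[simp] lemma toCn_smul (r : ℝ) (x : Rn n) : toCn (r • x) = (r : ℂ) • toCn x := by ext; simp

@[simp] lemma inner_toCn (x y : Rn n) : ⟪toCn x, toCn y⟫_ℂ = (⟪x, y⟫_ℝ : ℂ) := by
  simp [PiLp.inner_apply, mul_comm]

lemma toCn_re_add_I_smul_toCn_im (w : Cn n) :
    toCn (WithLp.toLp 2 fun i => (w i).re) + I • toCn (WithLp.toLp 2 fun i => (w i).im) = w := by
  ext i; simp [mul_comm I, re_add_im]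

lemma sum_smul_toCn_single (ζ : Cn n) :
    ∑ i, ζ i • toCn (EuclideanSpace.single i 1) = ζ := by
  ext j; simp [PiLp.single_apply, apply_ite]

end toCn

section evalP

variable {n k : ℕ} {p : MvPolynomial (Fin n) ℂ}

lemma MvPolynomial.IsHomogeneous.evalP_smul (hp : p.IsHomogeneous k) (c : ℂ) (ζ : Cn n) :
    evalP p (c • ζ) = c ^ k * evalP p ζ := by
  simp only [evalP, PiLp.smul_apply, smul_eq_mul, MvPolynomial.eval_eq, Finset.mul_sum]
  refine Finset.sum_congr rfl fun d hd => ?_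
  simp_rw [mul_pow, Finset.prod_mul_distrib, Finset.prod_pow_eq_pow_sum,
    ← hp.degree_eq_sum_deg_support hd]
  ring

lemma differentiable_evalP (p : MvPolynomial (Fin n) ℂ) : Differentiable ℂ (evalP p) := by
  unfold evalP
  induction p using MvPolynomial.induction_on with
  | C a => simp
  | add p q hp hq => simp only [map_add]; exact hp.add hq
  | mul_X p i hp =>
    simp only [map_mul, eval_X]; exact hp.mul (EuclideanSpace.proj (𝕜 := ℂ) i).differentiable

lemma evalP_zero_of_isHomogeneous (hp : p.IsHomogeneous k) (hk : 1 ≤ k) : evalP p 0 = 0 := by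
  simpa [zero_pow (by omega : k ≠ 0)] using hp.evalP_smul 0 0

lemma norm_evalP_toCn_le_of_sphere (hp : p.IsHomogeneous k) (hk : 1 ≤ k)
    (h : ∀ ω : Rn n, ‖ω‖ = 1 → ‖evalP p (toCn ω)‖ ≤ 1) (ω : Rn n) :
    ‖evalP p (toCn ω)‖ ≤ ‖ω‖ ^ k := by
  rcases eq_or_ne ω 0 with rfl | hω
  · simp [evalP_zero_of_isHomogeneous hp hk]
  · have hunit := h _ (NormedSpace.norm_normalize hω)
    rw [NormedSpace.normalize, toCn_smul, hp.evalP_smul, norm_mul, norm_pow] at hunit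
    simpa [inv_mul_le_one₀, norm_pos_iff.2 hω] using hunit

def innerPoly (y : Cn n) : MvPolynomial (Fin n) ℂ := ∑ i, C (conj (y i)) * X i

lemma isHomogeneous_innerPoly (y : Cn n) : (innerPoly y).IsHomogeneous 1 :=
  .sum _ _ _ fun i _ => isHomogeneous_C_mul_X _ i

@[simp] lemma evalP_innerPoly (y ζ : Cn n) : evalP (innerPoly y) ζ = ⟪y, ζ⟫_ℂ := by
  simp [innerPoly, evalP, PiLp.inner_apply, mul_comm]

end evalP

section extremal

variable {n : ℕ}

lemma siciak_le_ofReal {E : Set (Cn n)} {ζ : Cn n} {M : ℝ} (hM : 0 ≤ M)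
    (h : ∀ (p : MvPolynomial (Fin n) ℂ) (k : ℕ), p.IsHomogeneous k → 1 ≤ k →
      (∀ w ∈ E, ‖evalP p w‖ ≤ 1) → ‖evalP p ζ‖ ≤ M ^ k) :
    siciak E (fun _ => 1) ζ ≤ ENNReal.ofReal M := by
  refine iSup₂_le fun p k => iSup_le fun hp => iSup_le fun hk => iSup_le fun hE => ?_
  have hk₀ : (0 : ℝ) < k := by exact_mod_cast hk
  have hE' : ∀ w ∈ E, ‖evalP p w‖ ≤ 1 := fun w hw => by
    simpa [Real.rpow_inv_le_iff_of_pos (norm_nonneg _) zero_le_one hk₀] using hE w hw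
  refine ENNReal.ofReal_le_ofReal ?_
  rw [one_div, Real.rpow_inv_le_iff_of_pos (norm_nonneg _) hM hk₀, Real.rpow_natCast]
  exact h p k hp hk hE'

lemma ofReal_norm_inner_le_siciak {E : Set (Cn n)} {y : Cn n} (hy : ∀ w ∈ E, ‖⟪y, w⟫_ℂ‖ ≤ 1)
    (ζ : Cn n) : ENNReal.ofReal ‖⟪y, ζ⟫_ℂ‖ ≤ siciak E (fun _ => 1) ζ :=
  le_iSup_of_le (innerPoly y) <| le_iSup_of_le 1 <|
    le_iSup_of_le (isHomogeneous_innerPoly y) <| le_iSup_of_le le_rfl <|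
      le_iSup_of_le (by simpa using hy) (by simp)

lemma crossNorm_sum_smul_toCn_le {ν : Rn n → ℝ} (hν : ∀ ω, 0 ≤ ν ω) {N : ℕ} (α : Fin N → ℂ)
    (ω : Fin N → Rn n) : crossNorm ν (∑ j, α j • toCn (ω j)) ≤ ∑ j, ‖α j‖ * ν (ω j) := by
  refine csInf_le ⟨0, ?_⟩ ⟨N, α, ω, rfl, rfl⟩
  rintro s ⟨N, α, ω, -, rfl⟩
  exact Finset.sum_nonneg fun j _ => mul_nonneg (norm_nonneg _) (hν _)

lemma norm_inner_le_crossNorm {ν : Rn n → ℝ} {y : Cn n} (hy : ∀ ω, ‖⟪y, toCn ω⟫_ℂ‖ ≤ ν ω)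
    (ζ : Cn n) : ‖⟪y, ζ⟫_ℂ‖ ≤ crossNorm ν ζ := by
  refine le_csInf ⟨_, n, _, _, (sum_smul_toCn_single ζ).symm, rfl⟩ ?_
  rintro s ⟨N, α, ω, rfl, rfl⟩
  calc ‖⟪y, ∑ j, α j • toCn (ω j)⟫_ℂ‖ = ‖∑ j, α j * ⟪y, toCn (ω j)⟫_ℂ‖ := by
        simp
    _ ≤ ∑ j, ‖α j‖ * ‖⟪y, toCn (ω j)⟫_ℂ‖ := by
        simpa only [norm_mul] using norm_sum_le Finset.univ fun j => α j * ⟪y, toCn (ω j)⟫_ℂ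
    _ ≤ ∑ j, ‖α j‖ * ν (ω j) := by gcongr with j; exact hy _

end extremal

section euclidean

open NormedSpace

lemma norm_normalize_le_one {F : Type*} [NormedAddCommGroup F] [NormedSpace ℝ F] (x : F) :
    ‖normalize x‖ ≤ 1 := by
  rcases eq_or_ne x 0 with rfl | hx
  · simp
  · exact (norm_normalize hx).le

variable {F : Type*} [NormedAddCommGroup F] [InnerProductSpace ℝ F]

lemma inner_normalize_left (x y : F) : ⟪normalize x, y⟫_ℝ = ‖x‖⁻¹ * ⟪x, y⟫_ℝ := by
  rw [NormedSpace.normalize, real_inner_smul_left]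

lemma inner_normalize_right (x y : F) : ⟪x, normalize y⟫_ℝ = ‖y‖⁻¹ * ⟪x, y⟫_ℝ := by
  rw [NormedSpace.normalize, real_inner_smul_right]

lemma inner_normalize_self (x : F) : ⟪normalize x, x⟫_ℝ = ‖x‖ := by
  rw [inner_normalize_left, real_inner_self_eq_norm_sq]
  rcases eq_or_ne ‖x‖ 0 with h | h
  · simp [h]
  · field_simp

lemma inner_normalize_normalize_eq_zero {x y : F} (h : ⟪x, y⟫_ℝ = 0) :
    ⟪normalize x, normalize y⟫_ℝ = 0 := by
  simp [inner_normalize_left, inner_normalize_right, h]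

lemma inner_sq_add_inner_sq_le {u v : F} (hu : ‖u‖ ≤ 1) (hv : ‖v‖ ≤ 1) (huv : ⟪u, v⟫_ℝ = 0)
    (ω : F) : ⟪u, ω⟫_ℝ ^ 2 + ⟪v, ω⟫_ℝ ^ 2 ≤ ‖ω‖ ^ 2 := by
  set P := ⟪u, ω⟫_ℝ
  set Q := ⟪v, ω⟫_ℝ
  have hres : 0 ≤ ‖ω - P • u - Q • v‖ ^ 2 := sq_nonneg _
  rw [← real_inner_self_eq_norm_sq] at hres
  simp only [inner_sub_left, inner_sub_right, real_inner_smul_left, real_inner_smul_right,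
    real_inner_comm u ω, real_inner_comm v ω, real_inner_comm u v, huv,
    real_inner_self_eq_norm_sq, norm_smul, mul_pow, Real.norm_eq_abs, sq_abs] at hres
  have hu2 : ‖u‖ ^ 2 ≤ 1 := pow_le_one₀ (norm_nonneg u) hu
  have hv2 : ‖v‖ ^ 2 ≤ 1 := pow_le_one₀ (norm_nonneg v) hv
  nlinarith [mul_le_mul_of_nonneg_left hu2 (sq_nonneg P),
    mul_le_mul_of_nonneg_left hv2 (sq_nonneg Q)]

lemma norm_smul_add_smul_sq_le {u v : F} (hu : ‖u‖ ≤ 1) (hv : ‖v‖ ≤ 1) (huv : ⟪u, v⟫_ℝ = 0)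
    (a b : ℝ) : ‖a • u + b • v‖ ^ 2 ≤ a ^ 2 + b ^ 2 := by
  rw [norm_add_sq_real, real_inner_smul_left, real_inner_smul_right, huv, norm_smul, norm_smul,
    mul_pow, mul_pow, Real.norm_eq_abs, Real.norm_eq_abs, sq_abs, sq_abs]
  simp only [mul_zero, add_zero]
  gcongr
  · exact mul_le_of_le_one_right (sq_nonneg a) (pow_le_one₀ (norm_nonneg u) hu)
  · exact mul_le_of_le_one_right (sq_nonneg b) (pow_le_one₀ (norm_nonneg v) hv)

end euclidean

section complexification

open NormedSpace

variable {n : ℕ}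

lemma norm_inner_toCn_add_I_smul_le {u v : Rn n} (hu : ‖u‖ ≤ 1) (hv : ‖v‖ ≤ 1)
    (huv : ⟪u, v⟫_ℝ = 0) (ω : Rn n) : ‖⟪toCn u + I • toCn v, toCn ω⟫_ℂ‖ ≤ ‖ω‖ := by
  have h : ⟪toCn u + I • toCn v, toCn ω⟫_ℂ = (⟪u, ω⟫_ℝ : ℂ) + ((-⟪v, ω⟫_ℝ : ℝ) : ℂ) * I := by
    simp
  rw [h, norm_add_mul_I, neg_sq, Real.sqrt_le_left (norm_nonneg ω)]
  exact inner_sq_add_inner_sq_le hu hv huv ω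

lemma inner_toCn_normalize_add_I_smul {ξ η : Rn n} (hξη : ⟪ξ, η⟫_ℝ = 0) :
    ⟪toCn (normalize ξ) + I • toCn (normalize η), toCn ξ + I • toCn η⟫_ℂ = ‖ξ‖ + ‖η‖ := by
  have hηξ : ⟪η, ξ⟫_ℝ = 0 := by rwa [real_inner_comm]
  simp only [inner_add_left, inner_add_right, inner_smul_left, inner_smul_right, inner_toCn,
    inner_normalize_self, inner_normalize_left, hξη, hηξ, conj_I]
  push_cast
  linear_combination (-(‖η‖ : ℂ)) * I_mul_I

/-- The holomorphic extension to the disc of `z ↦ z • toCn (z.re • u + z.im • v)` on the unit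
circle, where `z * z.re = (z² + 1) / 2` and `z * z.im = I * (1 - z²) / 2`. -/
def joukowskiCurve (u v : Rn n) (z : ℂ) : Cn n :=
  ((z ^ 2 + 1) / 2) • toCn u + (I * (1 - z ^ 2) / 2) • toCn v

lemma differentiable_joukowskiCurve (u v : Rn n) : Differentiable ℂ (joukowskiCurve u v) := by
  unfold joukowskiCurve; fun_prop

lemma joukowskiCurve_of_norm_eq_one (u v : Rn n) {z : ℂ} (hz : ‖z‖ = 1) :
    joukowskiCurve u v z = z • toCn (z.re • u + z.im • v) := by
  have h : z.re * z.re + z.im * z.im = 1 := by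
    rw [← normSq_apply, normSq_eq_norm_sq, hz, one_pow]
  have hre : (z ^ 2 + 1) / 2 = z * z.re := by
    apply Complex.ext <;> simp [sq] <;> linarith
  have him : I * (1 - z ^ 2) / 2 = z * z.im := by
    apply Complex.ext <;> simp [sq] <;> linarith
  rw [joukowskiCurve, toCn_add, toCn_smul, toCn_smul, smul_add, smul_smul, smul_smul, hre, him]

variable {k : ℕ} {p : MvPolynomial (Fin n) ℂ}

lemma norm_evalP_joukowskiCurve_le_one (hp : p.IsHomogeneous k)
    (hbound : ∀ ω : Rn n, ‖evalP p (toCn ω)‖ ≤ ‖ω‖ ^ k) {u v : Rn n} (hu : ‖u‖ ≤ 1)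
    (hv : ‖v‖ ≤ 1) (huv : ⟪u, v⟫_ℝ = 0) {z : ℂ} (hz : ‖z‖ ≤ 1) :
    ‖evalP p (joukowskiCurve u v z)‖ ≤ 1 := by
  have hcircle : ∀ w : ℂ, ‖w‖ = 1 → ‖evalP p (joukowskiCurve u v w)‖ ≤ 1 := by
    intro w hw
    have hω : ‖w.re • u + w.im • v‖ ≤ 1 := by
      refine (pow_le_one_iff_of_nonneg (norm_nonneg _) two_ne_zero).mp ?_
      refine (norm_smul_add_smul_sq_le hu hv huv _ _).trans_eq ?_
      rw [sq, sq, ← normSq_apply, normSq_eq_norm_sq, hw, one_pow]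
    rw [joukowskiCurve_of_norm_eq_one u v hw, hp.evalP_smul, norm_mul, norm_pow, hw, one_pow,
      one_mul]
    exact (hbound _).trans (pow_le_one₀ (norm_nonneg _) hω)
  refine Complex.norm_le_of_forall_mem_frontier_norm_le (U := Metric.ball 0 1)
    Metric.isBounded_ball
    ((differentiable_evalP p).comp (differentiable_joukowskiCurve u v)).diffContOnCl
    (fun w hw => hcircle w ?_) ?_
  · simpa [frontier_ball (0 : ℂ) one_ne_zero] using hw
  · simpa [closure_ball (0 : ℂ) one_ne_zero] using hz

lemma norm_evalP_toCn_add_I_smul_le (hp : p.IsHomogeneous k)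
    (hbound : ∀ ω : Rn n, ‖evalP p (toCn ω)‖ ≤ ‖ω‖ ^ k) {ξ η : Rn n} (hξη : ⟪ξ, η⟫_ℝ = 0)
    (hηξ : ‖η‖ ≤ ‖ξ‖) : ‖evalP p (toCn ξ + I • toCn η)‖ ≤ (‖ξ‖ + ‖η‖) ^ k := by
  set s := ‖ξ‖ + ‖η‖
  rcases (show 0 ≤ s by positivity).eq_or_lt with hs | hs
  · obtain rfl : ξ = 0 := norm_eq_zero.mp (by linarith [norm_nonneg η])
    obtain rfl : η = 0 := norm_eq_zero.mp (by linarith [norm_nonneg η])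
    simpa [s] using hbound 0
  set r := √((‖ξ‖ - ‖η‖) / s)
  have hr : (r : ℂ) ^ 2 = ((‖ξ‖ - ‖η‖) / s : ℝ) := by
    rw [← ofReal_pow, Real.sq_sqrt (div_nonneg (by linarith) hs.le)]
  have hr1 : ‖(r : ℂ)‖ ≤ 1 := by
    rw [norm_real, Real.norm_of_nonneg (Real.sqrt_nonneg _), Real.sqrt_le_one,
      div_le_one hs]
    linarith [norm_nonneg η]
  have hcurve : toCn ξ + I • toCn η = (s : ℂ) • joukowskiCurve (normalize ξ) (normalize η) r := by
    conv_lhs => rw [← norm_smul_normalize ξ, ← norm_smul_normalize η]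
    rw [joukowskiCurve, hr, smul_add, smul_smul, smul_smul, toCn_smul, toCn_smul, smul_smul]
    have hsC : (‖ξ‖ : ℂ) + ‖η‖ ≠ 0 := by exact_mod_cast hs.ne'
    congr 2 <;> simp only [s] <;> push_cast <;> field_simp <;> ring
  rw [hcurve, hp.evalP_smul, norm_mul, norm_pow, norm_real, Real.norm_of_nonneg hs.le]
  exact mul_le_of_le_one_right (by positivity) (norm_evalP_joukowskiCurve_le_one hp hbound
    (norm_normalize_le_one ξ) (norm_normalize_le_one η)
    (inner_normalize_normalize_eq_zero hξη) hr1)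

end complexification

section normalForm

variable {n : ℕ}

lemma sum_sq_toCn_add_I_smul (ξ η : Rn n) :
    ∑ i, (toCn ξ + I • toCn η) i ^ 2 =
      ((‖ξ‖ ^ 2 - ‖η‖ ^ 2 : ℝ) : ℂ) + ((2 * ⟪ξ, η⟫_ℝ : ℝ) : ℂ) * I := by
  simp only [← real_inner_self_eq_norm_sq, PiLp.inner_apply, PiLp.add_apply, PiLp.smul_apply,
    toCn_apply, smul_eq_mul, RCLike.inner_apply, conj_trivial]
  push_cast
  rw [← Finset.sum_sub_distrib, Finset.mul_sum, Finset.sum_mul, ← Finset.sum_add_distrib]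
  refine Finset.sum_congr rfl fun i _ => ?_
  linear_combination (η i : ℂ) ^ 2 * I_sq

lemma exists_eq_smul_toCn_add_I_smul (ζ : Cn n) :
    ∃ (d : ℂ) (ξ η : Rn n), ‖d‖ = 1 ∧ ζ = d • (toCn ξ + I • toCn η) ∧ ⟪ξ, η⟫_ℝ = 0 ∧
      ‖η‖ ≤ ‖ξ‖ := by
  set q := ∑ i, ζ i ^ 2
  set c := exp (-(q.arg / 2 : ℝ) * I)
  have hc : ‖c‖ = 1 := by simpa [c] using norm_exp_ofReal_mul_I (-(q.arg / 2))
  have hc₀ : c ≠ 0 := exp_ne_zero _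
  have hcq : c ^ 2 * q = ‖q‖ := by
    have hce : c ^ 2 * exp (q.arg * I) = 1 := by
      rw [sq, ← exp_add, ← exp_add, ← exp_zero]; congr 1; push_cast; ring
    linear_combination (-c ^ 2) * norm_mul_exp_arg_mul_I q + ‖q‖ * hce
  set w := c • ζ
  set ξ : Rn n := WithLp.toLp 2 fun i => (w i).re
  set η : Rn n := WithLp.toLp 2 fun i => (w i).im
  have hw : toCn ξ + I • toCn η = w := toCn_re_add_I_smul_toCn_im w
  have hsum := sum_sq_toCn_add_I_smul ξ η
  rw [hw, show ∑ i, w i ^ 2 = c ^ 2 * q by simp [w, q, Finset.mul_sum, mul_pow], hcq] at hsum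
  have hre := congrArg re hsum
  have him := congrArg im hsum
  simp only [ofReal_re, ofReal_im, add_re, add_im, mul_re, mul_im, I_re, I_im] at hre him
  refine ⟨c⁻¹, ξ, η, by simp [hc], by simp [hw, w, smul_smul, hc₀], by linarith, ?_⟩
  exact (sq_le_sq₀ (norm_nonneg _) (norm_nonneg _)).mp (by linarith [norm_nonneg q])

end normalForm

/-- Theorem 2.6, first part: for the euclidean unit sphere `E = S^{n-1}`,
Siciak's homogeneous extremal function equals the cross norm of the euclidean norm. -/
theorem siciak_of_euclidean_sphere {n : ℕ} :
    ∀ ζ : Cn n,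
      siciak (toCn '' {x : Rn n | ‖x‖ = 1}) (fun _ => 1) ζ =
        ENNReal.ofReal (crossNorm (fun x => ‖x‖) ζ) := by
  intro ζ
  obtain ⟨d, ξ, η, hd, rfl, hξη, hηξ⟩ := exists_eq_smul_toCn_add_I_smul ζ
  set y := d • (toCn (NormedSpace.normalize ξ) + I • toCn (NormedSpace.normalize η))
  have hy : ∀ ω, ‖⟪y, toCn ω⟫_ℂ‖ ≤ ‖ω‖ := fun ω => by
    rw [inner_smul_left, norm_mul, norm_conj, hd, one_mul]
    exact norm_inner_toCn_add_I_smul_le (norm_normalize_le_one ξ) (norm_normalize_le_one η)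
      (inner_normalize_normalize_eq_zero hξη) ω
  have hyζ : ‖⟪y, d • (toCn ξ + I • toCn η)⟫_ℂ‖ = ‖ξ‖ + ‖η‖ := by
    rw [inner_smul_left, inner_smul_right, inner_toCn_normalize_add_I_smul hξη, ← mul_assoc,
      ← normSq_eq_conj_mul_self, normSq_eq_norm_sq, hd, one_pow, ofReal_one, one_mul,
      ← ofReal_add, norm_real, Real.norm_of_nonneg (by positivity)]
  have hcross : crossNorm (fun x => ‖x‖) (d • (toCn ξ + I • toCn η)) = ‖ξ‖ + ‖η‖ := by
    refine le_antisymm ?_ (hyζ ▸ norm_inner_le_crossNorm hy _)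
    simpa [Fin.sum_univ_two, smul_add, smul_smul, hd] using
      crossNorm_sum_smul_toCn_le norm_nonneg ![d, d * I] ![ξ, η]
  rw [hcross]
  refine le_antisymm (siciak_le_ofReal (by positivity) fun p k hp hk hE => ?_)
    (hyζ ▸ ofReal_norm_inner_le_siciak ?_ _)
  · rw [hp.evalP_smul, norm_mul, norm_pow, hd, one_pow, one_mul]
    exact norm_evalP_toCn_add_I_smul_le hp
      (norm_evalP_toCn_le_of_sphere hp hk fun ω hω => hE _ ⟨ω, hω, rfl⟩) hξη hηξ
  · rintro _ ⟨ω, hω, rfl⟩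
    exact (hy ω).trans hω.le

end
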